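/- arXiv:1801.06731 — 5 statements merged into one kernel-verified Lean document; each statement's English description precedes it below -/
import Mathlib

section
/- Let w_1 = (u_0, u_1, …, u_a) and w_2 = (v_0, v_1, …, v_b) be two vertex-disjoint paths of odd lengths a and b in the bipartite graph G (so the two endpoints of each path lie on different sides of the bipartition). Then the binomial u_0 u_a T_{w_1^+} T_{w_2^−} − v_0 v_b T_{w_1^−} T_{w_2^+} lies in the defining ideal 𝒬 = ker ψ of the Rees algebra of the edge ideal I(G). -/
open MvPolynomial

/-- The `k`-algebra map `ψ : S = k[x,y,T] → R[t]` presenting the Rees algebra of the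
edge ideal of the bipartite graph whose edges are given by `edge : E → Fin n × Fin m`
(the edge indexed by `e` joins `x_{(edge e).1}` and `y_{(edge e).2}`).
Here the variables of `S` are indexed by `Sum (Sum (Fin n) (Fin m)) E` and the variables
of `R[t]` by `Sum (Sum (Fin n) (Fin m)) Unit` (`Sum.inr ()` playing the role of `t`). -/
noncomputable def reesPsi (k : Type*) [CommSemiring k] (n m : ℕ) {E : Type*}
    (edge : E → Fin n × Fin m) :
    MvPolynomial (Sum (Sum (Fin n) (Fin m)) E) k →ₐ[k]
      MvPolynomial (Sum (Sum (Fin n) (Fin m)) Unit) k :=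
  aeval fun s =>
    match s with
    | Sum.inl v => X (Sum.inl v)
    | Sum.inr e =>
        X (Sum.inl (Sum.inl (edge e).1)) * X (Sum.inl (Sum.inr (edge e).2)) * X (Sum.inr ())

/-- A walk `(v_0, …, v_a)` of length `a` in the bipartite graph whose edges are given by
`edge : E → Fin n × Fin m`: the `j`-th step traverses the edge indexed by `edgeIdx j`,
which joins the vertices `vert j` and `vert (j+1)`. -/
structure BipWalk (n m : ℕ) {E : Type*} (edge : E → Fin n × Fin m) (a : ℕ) where
  vert : Fin (a + 1) → Sum (Fin n) (Fin m)
  edgeIdx : Fin a → E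
  incident : ∀ j : Fin a,
    (vert j.castSucc = Sum.inl (edge (edgeIdx j)).1 ∧
      vert j.succ = Sum.inr (edge (edgeIdx j)).2) ∨
    (vert j.castSucc = Sum.inr (edge (edgeIdx j)).2 ∧
      vert j.succ = Sum.inl (edge (edgeIdx j)).1)

/-- `T_{w+} = ∏_{j even} T_{i_j}`, the product of the `T`-variables of the even-numbered
edges of the walk `w` (edges being numbered `1, …, a`, so `j`-th edge is `edgeIdx (j-1)`). -/
noncomputable def Tplus (k : Type*) [CommSemiring k] {n m a : ℕ} {E : Type*}
    {edge : E → Fin n × Fin m} (w : BipWalk n m edge a) :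
    MvPolynomial (Sum (Sum (Fin n) (Fin m)) E) k :=
  ∏ j : Fin a, if (j : ℕ) % 2 = 1 then X (Sum.inr (w.edgeIdx j)) else 1

/-- `T_{w−} = ∏_{j odd} T_{i_j}`, the product of the `T`-variables of the odd-numbered
edges of the walk `w`. -/
noncomputable def Tminus (k : Type*) [CommSemiring k] {n m a : ℕ} {E : Type*}
    {edge : E → Fin n × Fin m} (w : BipWalk n m edge a) :
    MvPolynomial (Sum (Sum (Fin n) (Fin m)) E) k :=
  ∏ j : Fin a, if (j : ℕ) % 2 = 0 then X (Sum.inr (w.edgeIdx j)) else 1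


lemma aux_prod {R : Type*} [CommSemiring R] (t : R) :
    ∀ (c : ℕ) (V M : ℕ → R), (∀ j, j < 2*c+1 → M j = V j * V (j+1) * t) →
      V 0 * V (2*c+1) * (∏ j ∈ Finset.range (2*c+1), if j % 2 = 1 then M j else 1) * t
        = ∏ j ∈ Finset.range (2*c+1), if j % 2 = 0 then M j else 1 := by
  intro c
  induction c with
  | zero =>
    intro V M hM
    simp [hM 0 (by norm_num)]
  | succ c ih =>
    intro V M hM
    have h3 : 2*(c+1)+1 = (2*c+1) + 1 + 1 := by ring
    rw [h3, Finset.prod_range_succ (fun j => if j % 2 = 1 then M j else 1),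
        Finset.prod_range_succ (fun j => if j % 2 = 1 then M j else 1),
        Finset.prod_range_succ (fun j => if j % 2 = 0 then M j else 1),
        Finset.prod_range_succ (fun j => if j % 2 = 0 then M j else 1)]
    have he1 : (2*c+1) % 2 = 1 := by omega
    rw [if_pos he1, if_neg (by omega), if_neg (by omega), if_pos (by omega : (2*c+1+1) % 2 = 0)]
    have key := ih V M (fun j hj => hM j (by omega))
    rw [hM (2*c+1) (by omega), hM (2*c+1+1) (by omega), mul_one, mul_one, ← key]
    ring

lemma walk_key (k : Type*) [CommSemiring k] {n m : ℕ} {E : Type*} (edge : E → Fin n × Fin m)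
    {a : ℕ} (ha : Odd a) (w : BipWalk n m edge a) :
    reesPsi k n m edge (X (Sum.inl (w.vert 0)) * X (Sum.inl (w.vert (Fin.last a))) * Tplus k w)
      * X (Sum.inr ())
      = reesPsi k n m edge (Tminus k w) := by
  obtain ⟨c, hc⟩ := ha
  subst hc
  set ψ := reesPsi k n m edge with hψ
  set V : ℕ → MvPolynomial (Sum (Sum (Fin n) (Fin m)) Unit) k :=
    fun i => if h : i < 2*c+1+1 then X (Sum.inl (w.vert ⟨i, h⟩)) else 1 with hV
  set M : ℕ → MvPolynomial (Sum (Sum (Fin n) (Fin m)) Unit) k :=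
    fun j => if h : j < 2*c+1 then ψ (X (Sum.inr (w.edgeIdx ⟨j, h⟩))) else 1 with hM
  have hMspec : ∀ j, j < 2*c+1 → M j = V j * V (j+1) * X (Sum.inr ()) := by
    intro j hj
    have hj1 : j < 2*c+1+1 := by omega
    have hj2 : j + 1 < 2*c+1+1 := by omega
    simp only [hM, hV, dif_pos hj, dif_pos hj1, dif_pos hj2]
    have : ψ (X (Sum.inr (w.edgeIdx ⟨j, hj⟩))) =
        X (Sum.inl (Sum.inl (edge (w.edgeIdx ⟨j, hj⟩)).1)) *
          X (Sum.inl (Sum.inr (edge (w.edgeIdx ⟨j, hj⟩)).2)) * X (Sum.inr ()) := by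
      simp [hψ, reesPsi]
    rw [this]
    have hcs : (⟨j, hj⟩ : Fin (2*c+1)).castSucc = (⟨j, hj1⟩ : Fin (2*c+1+1)) := rfl
    have hsu : (⟨j, hj⟩ : Fin (2*c+1)).succ = (⟨j+1, hj2⟩ : Fin (2*c+1+1)) := rfl
    rcases w.incident ⟨j, hj⟩ with ⟨h1, h2⟩ | ⟨h1, h2⟩ <;>
      rw [hcs] at h1 <;> rw [hsu] at h2 <;> rw [← h1, ← h2] <;> ring
  have hplus : ψ (Tplus k w) = ∏ j ∈ Finset.range (2*c+1), if j % 2 = 1 then M j else 1 := by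
    rw [Tplus, map_prod, ← Fin.prod_univ_eq_prod_range (fun j => if j % 2 = 1 then M j else 1)]
    apply Finset.prod_congr rfl
    intro j _
    rw [apply_ite ψ, map_one]
    simp only [hM, dif_pos j.isLt, Fin.eta]
  have hminus : ψ (Tminus k w) = ∏ j ∈ Finset.range (2*c+1), if j % 2 = 0 then M j else 1 := by
    rw [Tminus, map_prod, ← Fin.prod_univ_eq_prod_range (fun j => if j % 2 = 0 then M j else 1)]
    apply Finset.prod_congr rfl
    intro j _
    rw [apply_ite ψ, map_one]
    simp only [hM, dif_pos j.isLt, Fin.eta]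
  have hV0 : V 0 = X (Sum.inl (w.vert 0)) := by
    simp only [hV, dif_pos (by omega : 0 < 2*c+1+1)]
    rfl
  have hVl : V (2*c+1) = X (Sum.inl (w.vert (Fin.last (2*c+1)))) := by
    simp only [hV, dif_pos (by omega : 2*c+1 < 2*c+1+1)]
    rfl
  have hXl : ∀ v : Sum (Fin n) (Fin m), ψ (X (Sum.inl v)) = X (Sum.inl v) := by
    intro v; simp [hψ, reesPsi]
  rw [map_mul, map_mul, hXl, hXl, hplus, hminus, ← hV0, ← hVl]
  exact aux_prod (X (Sum.inr ())) c V M hMspec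


/-- For two vertex-disjoint paths `w₁ = (u_0, …, u_a)` and
`w₂ = (v_0, …, v_b)` of odd lengths `a` and `b` in the bipartite graph `G`, the binomial
`u_0 u_a T_{w₁+} T_{w₂−} − v_0 v_b T_{w₁−} T_{w₂+}` lies in the defining ideal
`𝒬 = ker ψ` of the Rees algebra of the edge ideal `I(G)`. -/
theorem disjoint_odd_paths_binomial_mem_ker_reesPsi (k : Type*) [Field k] (n m q : ℕ)
    (edge : Fin q → Fin n × Fin m) (hedge : Function.Injective edge)
    (a b : ℕ) (ha : Odd a) (hb : Odd b)
    (w₁ : BipWalk n m edge a) (w₂ : BipWalk n m edge b)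
    (hpath₁ : Function.Injective w₁.vert) (hpath₂ : Function.Injective w₂.vert)
    (hdisj : Disjoint (Set.range w₁.vert) (Set.range w₂.vert)) :
    X (Sum.inl (w₁.vert 0)) * X (Sum.inl (w₁.vert (Fin.last a))) *
        (Tplus k w₁ * Tminus k w₂) -
      X (Sum.inl (w₂.vert 0)) * X (Sum.inl (w₂.vert (Fin.last b))) *
        (Tminus k w₁ * Tplus k w₂) ∈
      RingHom.ker (reesPsi k n m edge) := by
  rw [RingHom.mem_ker, map_sub, sub_eq_zero]
  apply mul_right_cancel₀ (MvPolynomial.X_ne_zero (Sum.inr () : Sum (Sum (Fin n) (Fin m)) Unit))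
  have h1 := walk_key k edge ha w₁
  have h2 := walk_key k edge hb w₂
  calc reesPsi k n m edge
        (X (Sum.inl (w₁.vert 0)) * X (Sum.inl (w₁.vert (Fin.last a))) *
          (Tplus k w₁ * Tminus k w₂)) * X (Sum.inr ())
      = reesPsi k n m edge
          (X (Sum.inl (w₁.vert 0)) * X (Sum.inl (w₁.vert (Fin.last a))) * Tplus k w₁)
          * X (Sum.inr ()) * reesPsi k n m edge (Tminus k w₂) := by
        simp only [map_mul]; ring
    _ = reesPsi k n m edge (Tminus k w₁) * reesPsi k n m edge (Tminus k w₂) := by rw [h1]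
    _ = reesPsi k n m edge (Tminus k w₁) *
          (reesPsi k n m edge
            (X (Sum.inl (w₂.vert 0)) * X (Sum.inl (w₂.vert (Fin.last b))) * Tplus k w₂)
            * X (Sum.inr ())) := by rw [h2]
    _ = reesPsi k n m edge
          (X (Sum.inl (w₂.vert 0)) * X (Sum.inl (w₂.vert (Fin.last b))) *
            (Tminus k w₁ * Tplus k w₂)) * X (Sum.inr ()) := by
        simp only [map_mul]; ring
end

section
/- The defining ideal 𝒬 = ker ψ of the Rees algebra of the edge ideal I(G) of a bipartite graph G is generated by binomials m_1 − m_2 in which both monomials m_1 and m_2 are squarefree and have degree at most 1 in the x-variables x_1,…,x_n and degree at most 1 in the y-variables y_1,…,y_m. -/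
/-!
The map `ψ` sends monomials to monomials, so its kernel is spanned by the binomials
`x^γ - x^δ` with `ψ(x^γ) = ψ(x^δ)`. Regard every variable of `S` as an edge of a bipartite
multigraph on `{x₀, x₁, …, xₙ} ⊔ {y₀, y₁, …, yₘ}` (`x₀`, `y₀` being `none`): `xᵢ` joins `xᵢ` and
`y₀`, `yⱼ` joins `x₀` and `yⱼ`, and `T_ℓ` is the edge `f_ℓ`. Then `ψ(x^γ) = ψ(x^δ)` says exactly
that the edge multisets `γ` and `δ` have the same degree at every vertex, the `t`-degree
accounting for the degrees at `x₀` and `y₀`.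

Following an alternating trail of `γ`- and `δ`-edges from an edge of `γ` at a vertex `v` until
it returns to `v` gives a balanced subpair of `(γ, δ)` of degree one at `v`. Hence a minimal
nonzero balanced subpair `(C, D)` has degree at most one at every vertex, which makes
`x^C - x^D` squarefree of degree at most one in the `x`'s (the degree at `y₀`) and in the `y`'s
(the degree at `x₀`). Induction on `γ` with
`x^γ - x^δ = x^(γ-C) (x^C - x^D) + x^D (x^(γ-C) - x^(δ-D))` finishes the proof.
-/

open MvPolynomial

open Finsupp

namespace Finsupp

variable {E A M : Type*}

lemma exists_apply_ne_zero_of_mapDomain_apply_ne_zero [AddCommMonoid M] {c : E →₀ M}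
    {s : E → A} {a : A}
    (h : c.mapDomain s a ≠ 0) : ∃ e, s e = a ∧ c e ≠ 0 := by
  classical
  obtain ⟨e, he, rfl⟩ := Finset.mem_image.1 (mapDomain_support (mem_support_iff.2 h))
  exact ⟨e, rfl, mem_support_iff.1 he⟩

lemma apply_le_mapDomain_apply [AddCommMonoid M] [PartialOrder M] [IsOrderedAddMonoid M]
    [CanonicallyOrderedAdd M] (c : E →₀ M) (s : E → A) (e : E) : c e ≤ c.mapDomain s (s e) := by
  simpa using mapDomain_mono (f := s) (single_le_iff.2 le_rfl : single e (c e) ≤ c) (s e)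

lemma exists_add_single_le_of_mapDomain_apply_lt {c d : E →₀ ℕ} {s : E → A} {a : A}
    (hcd : c ≤ d) (h : c.mapDomain s a < d.mapDomain s a) : ∃ e, s e = a ∧ c + single e 1 ≤ d := by
  have hsplit : d.mapDomain s = c.mapDomain s + (d - c).mapDomain s := by
    rw [← mapDomain_add, add_tsub_cancel_of_le hcd]
  obtain ⟨e, rfl, he⟩ := exists_apply_ne_zero_of_mapDomain_apply_ne_zero (c := d - c) (s := s)
    (a := a) (by rw [hsplit, coe_add, Pi.add_apply] at h; omega)
  refine ⟨e, rfl, fun x => ?_⟩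
  rw [tsub_apply] at he
  rcases eq_or_ne x e with rfl | hx
  · simp only [coe_add, Pi.add_apply, single_eq_same, Order.add_one_le_iff]
    omega
  · simpa [hx] using hcd x

lemma degree_tsub_add_single_lt {d δ : E →₀ ℕ} {f : E} (h : d + single f 1 ≤ δ) :
    degree (δ - (d + single f 1)) < degree (δ - d) := by
  have : δ - (d + single f 1) + single f 1 = δ - d := by
    rw [← tsub_tsub, tsub_add_cancel_of_le (le_tsub_of_add_le_left h)]
  rw [← this, map_add, degree_single]
  omega

end Finsupp

section Balanced

variable {E A B : Type*}

def IsBalanced (s : E → A) (t : E → B) (c d : E →₀ ℕ) : Prop :=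
  c.mapDomain s = d.mapDomain s ∧ c.mapDomain t = d.mapDomain t

variable {s : E → A} {t : E → B} {γ δ : E →₀ ℕ}

lemma IsBalanced.swap (h : IsBalanced s t γ δ) : IsBalanced t s γ δ := h.symm

/-- `c` and `d` form an alternating trail from `b₀` to `a`, starting and ending with `c`-edges.
Appending an unused `δ`-edge at `a` either closes it at `b₀` or can be followed by an unused
`γ`-edge; `d` grows inside `δ`, so the trail eventually closes. -/
theorem IsBalanced.exists_of_trail (hb : IsBalanced s t γ δ) (b₀ : B) {c d : E →₀ ℕ} (a : A)
    (hc : c ≤ γ) (hd : d ≤ δ) (hs : c.mapDomain s = d.mapDomain s + single a 1)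
    (ht : c.mapDomain t = d.mapDomain t + single b₀ 1) (hb₀ : d.mapDomain t b₀ = 0) :
    ∃ C ≤ γ, ∃ D ≤ δ, IsBalanced s t C D ∧ C.mapDomain t b₀ = 1 := by
  obtain ⟨f, rfl, hf⟩ : ∃ f, s f = a ∧ d + single f 1 ≤ δ := by
    refine exists_add_single_le_of_mapDomain_apply_lt hd ?_
    calc d.mapDomain s a < c.mapDomain s a := by simp [hs]
      _ ≤ γ.mapDomain s a := mapDomain_mono hc a
      _ = δ.mapDomain s a := by rw [hb.1]
  have hs' : c.mapDomain s = (d + single f 1).mapDomain s := by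
    rw [mapDomain_add, mapDomain_single, hs]
  have ht' : (d + single f 1).mapDomain t = d.mapDomain t + single (t f) 1 := by
    rw [mapDomain_add, mapDomain_single]
  by_cases hclose : t f = b₀
  · exact ⟨c, hc, d + single f 1, hf, ⟨hs', by rw [ht', ht, hclose]⟩, by simp [ht, hb₀]⟩
  obtain ⟨g, hg, hcg⟩ : ∃ g, t g = t f ∧ c + single g 1 ≤ γ := by
    refine exists_add_single_le_of_mapDomain_apply_lt hc ?_
    calc c.mapDomain t (t f) = d.mapDomain t (t f) := by simp [ht, hclose]
      _ < (d + single f 1).mapDomain t (t f) := by simp [ht']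
      _ ≤ δ.mapDomain t (t f) := mapDomain_mono hf _
      _ = γ.mapDomain t (t f) := by rw [hb.2]
  refine hb.exists_of_trail b₀ (s g) hcg hf (by rw [mapDomain_add, mapDomain_single, hs']) ?_ ?_
  · rw [mapDomain_add, mapDomain_single, ht, ht', hg]
    abel
  · simp [ht', hb₀, hclose]
termination_by degree (δ - d)
decreasing_by exact degree_tsub_add_single_lt hf

theorem IsBalanced.exists_le_mapDomain_apply_eq_one (hb : IsBalanced s t γ δ) {e : E}
    (he : γ e ≠ 0) : ∃ C ≤ γ, ∃ D ≤ δ, IsBalanced s t C D ∧ C.mapDomain t (t e) = 1 :=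
  hb.exists_of_trail (t e) (s e) (d := 0) (single_le_iff.2 (Nat.one_le_iff_ne_zero.2 he))
    zero_le (by simp) (by simp) (by simp)

lemma IsBalanced.mapDomain_apply_le_one_of_minimal (hb : IsBalanced s t γ δ)
    (hmin : ∀ C ≤ γ, ∀ D ≤ δ, IsBalanced s t C D → C ≠ 0 → C = γ) (b : B) :
    γ.mapDomain t b ≤ 1 := by
  by_contra! h
  obtain ⟨e, rfl, he⟩ := exists_apply_ne_zero_of_mapDomain_apply_ne_zero (by omega :
    γ.mapDomain t b ≠ 0)
  obtain ⟨C, hC, D, hD, hCD, h1⟩ := hb.exists_le_mapDomain_apply_eq_one he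
  rw [hmin C hC D hD hCD (by rintro rfl; simp at h1)] at h1
  omega

theorem IsBalanced.exists_le_mapDomain_le_one (hb : IsBalanced s t γ δ) (hγ : γ ≠ 0) :
    ∃ C ≤ γ, ∃ D ≤ δ, C ≠ 0 ∧ IsBalanced s t C D ∧
      (∀ a, C.mapDomain s a ≤ 1) ∧ ∀ b, C.mapDomain t b ≤ 1 := by
  obtain ⟨C, ⟨hCγ, hC0, D, hDδ, hCD⟩, hmin⟩ := wellFounded_lt.has_min
    {C | C ≤ γ ∧ C ≠ 0 ∧ ∃ D ≤ δ, IsBalanced s t C D} ⟨γ, le_rfl, hγ, δ, le_rfl, hb⟩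
  have hmin' : ∀ C' ≤ C, ∀ D' ≤ D, IsBalanced s t C' D' → C' ≠ 0 → C' = C :=
    fun C' hC' D' hD' hb' hC'0 =>
      hC'.eq_of_not_lt (hmin C' ⟨hC'.trans hCγ, hC'0, D', hD'.trans hDδ, hb'⟩)
  refine ⟨C, hCγ, D, hDδ, hC0, hCD, ?_, hCD.mapDomain_apply_le_one_of_minimal hmin'⟩
  exact hCD.swap.mapDomain_apply_le_one_of_minimal
    fun C' hC' D' hD' hb' => hmin' C' hC' D' hD' hb'.swap

end Balanced

namespace MvPolynomial

variable {σ τ R : Type*}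

theorem aeval_monomial_of_monomial [CommSemiring R] (f : σ → τ →₀ ℕ) (γ : σ →₀ ℕ) (a : R) :
    aeval (fun v => monomial (f v) (1 : R)) (monomial γ a) =
      monomial (linearCombination ℕ f γ) a := by
  rw [aeval_monomial, linearCombination_apply, monomial_finsupp_sum_index, algebraMap_eq]
  simp [monomial_pow]

theorem ker_eq_span_binomials [CommRing R] {F : Type*}
    [FunLike F (MvPolynomial σ R) (MvPolynomial τ R)]
    [RingHomClass F (MvPolynomial σ R) (MvPolynomial τ R)] (φ : F)
    (Φ : (σ →₀ ℕ) → τ →₀ ℕ) (hφ : ∀ γ a, φ (monomial γ a) = monomial (Φ γ) a) :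
    RingHom.ker φ = Ideal.span {f | ∃ γ δ, Φ γ = Φ δ ∧ f = monomial γ 1 - monomial δ 1} := by
  refine le_antisymm (fun f hf => ?_) (Ideal.span_le.2 ?_)
  · set ρ := Function.invFun Φ ∘ Φ
    have hρ : ∀ γ, Φ (ρ γ) = Φ γ := fun γ => Function.invFun_eq ⟨γ, rfl⟩
    -- `ρ` chooses one exponent in each fibre of `Φ`, so folding `f` along `ρ` factors through `φ`
    have hfold : ∀ p : MvPolynomial σ R, AddMonoidAlgebra.mapDomain ρ p =
        AddMonoidAlgebra.mapDomain (Function.invFun Φ) (φ p) := by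
      intro p
      induction p using induction_on' with
      | monomial γ a =>
        rw [hφ, ← single_eq_monomial, ← single_eq_monomial, AddMonoidAlgebra.mapDomain_single,
          AddMonoidAlgebra.mapDomain_single]
        rfl
      | add p q hp hq =>
        rw [AddMonoidAlgebra.mapDomain_add, hp, hq, map_add, AddMonoidAlgebra.mapDomain_add]
    have hsub : ∀ p : MvPolynomial σ R, p - AddMonoidAlgebra.mapDomain ρ p ∈
        Ideal.span {f | ∃ γ δ, Φ γ = Φ δ ∧ f = monomial γ 1 - monomial δ 1} := by
      intro p
      induction p using induction_on' with
      | monomial γ a =>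
        rw [← single_eq_monomial, AddMonoidAlgebra.mapDomain_single, single_eq_monomial,
          single_eq_monomial, ← mul_one a, ← C_mul_monomial, ← C_mul_monomial, ← mul_sub]
        exact Ideal.mul_mem_left _ _ (Ideal.subset_span ⟨γ, ρ γ, (hρ γ).symm, rfl⟩)
      | add p q hp hq =>
        rw [AddMonoidAlgebra.mapDomain_add, add_sub_add_comm]
        exact add_mem hp hq
    simpa [hfold, RingHom.mem_ker.1 hf] using hsub f
  · rintro _ ⟨γ, δ, h, rfl⟩
    simp [hφ, h]

end MvPolynomial

namespace Rees

section

variable {n m : ℕ} {E : Type*} (edge : E → Fin n × Fin m)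

noncomputable def exponent : (Fin n ⊕ Fin m) ⊕ E → (Fin n ⊕ Fin m) ⊕ Unit →₀ ℕ
  | .inl v => single (.inl v) 1
  | .inr e => single (.inl (.inl (edge e).1)) 1 + single (.inl (.inr (edge e).2)) 1 +
      single (.inr ()) 1

def xEnd : (Fin n ⊕ Fin m) ⊕ E → Option (Fin n)
  | .inl (.inl i) => some i
  | .inl (.inr _) => none
  | .inr e => some (edge e).1

def yEnd : (Fin n ⊕ Fin m) ⊕ E → Option (Fin m)
  | .inl (.inl _) => none
  | .inl (.inr j) => some j
  | .inr e => some (edge e).2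

theorem reesPsi_monomial {k : Type*} [CommSemiring k] (γ : (Fin n ⊕ Fin m) ⊕ E →₀ ℕ) (a : k) :
    reesPsi k n m edge (monomial γ a) = monomial (linearCombination ℕ (exponent edge) γ) a := by
  have : reesPsi k n m edge = aeval fun v => monomial (exponent edge v) 1 := by
    unfold reesPsi
    congr
    funext v
    rcases v with v | e <;> simp [exponent, X, monomial_mul]
  rw [this, aeval_monomial_of_monomial]

variable {edge}

lemma linearCombination_exponent_apply_x (γ : (Fin n ⊕ Fin m) ⊕ E →₀ ℕ) (i : Fin n) :
    linearCombination ℕ (exponent edge) γ (.inl (.inl i)) = γ.mapDomain (xEnd edge) (some i) := by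
  induction γ using Finsupp.induction_linear with
  | zero => simp
  | add => simp [*, mapDomain_add]
  | single v c => rcases v with (i' | j) | e <;> simp [exponent, xEnd, single_apply]

lemma linearCombination_exponent_apply_y (γ : (Fin n ⊕ Fin m) ⊕ E →₀ ℕ) (j : Fin m) :
    linearCombination ℕ (exponent edge) γ (.inl (.inr j)) = γ.mapDomain (yEnd edge) (some j) := by
  induction γ using Finsupp.induction_linear with
  | zero => simp
  | add => simp [*, mapDomain_add]
  | single v c => rcases v with (i | j') | e <;> simp [exponent, yEnd, single_apply]

lemma mapDomain_xEnd_none (γ : (Fin n ⊕ Fin m) ⊕ E →₀ ℕ) :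
    γ.mapDomain (xEnd edge) none = ∑ j, γ (.inl (.inr j)) := by
  classical
  induction γ using Finsupp.induction_linear with
  | zero => simp
  | add => simp [*, mapDomain_add, Finset.sum_add_distrib]
  | single v c => rcases v with (i | j) | e <;> simp [xEnd, single_apply]

lemma mapDomain_yEnd_none (γ : (Fin n ⊕ Fin m) ⊕ E →₀ ℕ) :
    γ.mapDomain (yEnd edge) none = ∑ i, γ (.inl (.inl i)) := by
  classical
  induction γ using Finsupp.induction_linear with
  | zero => simp
  | add => simp [*, mapDomain_add, Finset.sum_add_distrib]
  | single v c => rcases v with (i | j) | e <;> simp [yEnd, single_apply]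

lemma sum_linearCombination_exponent_apply_x (γ : (Fin n ⊕ Fin m) ⊕ E →₀ ℕ) :
    ∑ i, linearCombination ℕ (exponent edge) γ (.inl (.inl i)) =
      ∑ i, γ (.inl (.inl i)) + linearCombination ℕ (exponent edge) γ (.inr ()) := by
  classical
  induction γ using Finsupp.induction_linear with
  | zero => simp
  | add => simp [*, Finset.sum_add_distrib]; ring
  | single v c => rcases v with (i | j) | e <;> simp [exponent, single_apply]

lemma sum_linearCombination_exponent_apply_y (γ : (Fin n ⊕ Fin m) ⊕ E →₀ ℕ) :
    ∑ j, linearCombination ℕ (exponent edge) γ (.inl (.inr j)) =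
      ∑ j, γ (.inl (.inr j)) + linearCombination ℕ (exponent edge) γ (.inr ()) := by
  classical
  induction γ using Finsupp.induction_linear with
  | zero => simp
  | add => simp [*, Finset.sum_add_distrib]; ring
  | single v c => rcases v with (i | j) | e <;> simp [exponent, single_apply]

theorem linearCombination_exponent_eq_iff {γ δ : (Fin n ⊕ Fin m) ⊕ E →₀ ℕ} :
    linearCombination ℕ (exponent edge) γ = linearCombination ℕ (exponent edge) δ ↔
      IsBalanced (xEnd edge) (yEnd edge) γ δ := by
  constructor
  · intro h
    have hx := sum_linearCombination_exponent_apply_x (edge := edge) γ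
    have hy := sum_linearCombination_exponent_apply_y (edge := edge) γ
    rw [h, sum_linearCombination_exponent_apply_x] at hx
    rw [h, sum_linearCombination_exponent_apply_y] at hy
    constructor <;> ext (_ | i)
    · simp only [mapDomain_xEnd_none] at hy ⊢
      omega
    · rw [← linearCombination_exponent_apply_x, ← linearCombination_exponent_apply_x, h]
    · simp only [mapDomain_yEnd_none] at hx ⊢
      omega
    · rw [← linearCombination_exponent_apply_y, ← linearCombination_exponent_apply_y, h]
  · intro hb
    ext ((i | j) | u)
    · rw [linearCombination_exponent_apply_x, linearCombination_exponent_apply_x, hb.1]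
    · rw [linearCombination_exponent_apply_y, linearCombination_exponent_apply_y, hb.2]
    · obtain rfl : u = () := rfl
      have hx := sum_linearCombination_exponent_apply_x (edge := edge) γ
      have hx' := sum_linearCombination_exponent_apply_x (edge := edge) δ
      simp only [linearCombination_exponent_apply_x, hb.1] at hx hx'
      have hnone := congrArg (· none) hb.2
      simp only [mapDomain_yEnd_none] at hnone
      omega

end

def generators (k : Type*) [CommRing k] (n m : ℕ) {E : Type*} (edge : E → Fin n × Fin m) :
    Set (MvPolynomial ((Fin n ⊕ Fin m) ⊕ E) k) :=
  {f | f ∈ RingHom.ker (reesPsi k n m edge) ∧ ∃ α β : (Fin n ⊕ Fin m) ⊕ E →₀ ℕ,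
    f = monomial α 1 - monomial β 1 ∧
    (∀ s, α s ≤ 1) ∧ (∀ s, β s ≤ 1) ∧
    (∑ i : Fin n, α (Sum.inl (Sum.inl i))) ≤ 1 ∧
    (∑ j : Fin m, α (Sum.inl (Sum.inr j))) ≤ 1 ∧
    (∑ i : Fin n, β (Sum.inl (Sum.inl i))) ≤ 1 ∧
    (∑ j : Fin m, β (Sum.inl (Sum.inr j))) ≤ 1}

section

variable {k : Type*} [CommRing k] {n m : ℕ} {E : Type*} {edge : E → Fin n × Fin m}

theorem monomial_sub_monomial_mem_generators {C D : (Fin n ⊕ Fin m) ⊕ E →₀ ℕ}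
    (hCD : IsBalanced (xEnd edge) (yEnd edge) C D) (hx : ∀ a, C.mapDomain (xEnd edge) a ≤ 1)
    (hy : ∀ b, C.mapDomain (yEnd edge) b ≤ 1) :
    monomial C 1 - monomial D 1 ∈ generators k n m edge := by
  have hx' : ∀ a, D.mapDomain (xEnd edge) a ≤ 1 := hCD.1 ▸ hx
  have hy' : ∀ b, D.mapDomain (yEnd edge) b ≤ 1 := hCD.2 ▸ hy
  refine ⟨?_, C, D, rfl, fun v => (C.apply_le_mapDomain_apply _ v).trans (hx _),
    fun v => (D.apply_le_mapDomain_apply _ v).trans (hx' _), ?_, ?_, ?_, ?_⟩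
  · simp [RingHom.mem_ker, reesPsi_monomial, linearCombination_exponent_eq_iff.2 hCD]
  · simpa only [mapDomain_yEnd_none] using hy none
  · simpa only [mapDomain_xEnd_none] using hx none
  · simpa only [mapDomain_yEnd_none] using hy' none
  · simpa only [mapDomain_xEnd_none] using hx' none

theorem monomial_sub_monomial_mem_span_generators {γ δ : (Fin n ⊕ Fin m) ⊕ E →₀ ℕ}
    (h : linearCombination ℕ (exponent edge) γ = linearCombination ℕ (exponent edge) δ) :
    monomial γ 1 - monomial δ 1 ∈ Ideal.span (generators k n m edge) := by
  induction γ using WellFoundedLT.induction generalizing δ with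
  | ind γ ih =>
  have hb := linearCombination_exponent_eq_iff.1 h
  obtain rfl | hγ := eq_or_ne γ 0
  · obtain rfl : δ = 0 := (mapDomain_apply_eq_zero_iff_of_subsingletonAddUnits (xEnd edge) δ).1
      (by rw [← hb.1, mapDomain_zero])
    simp
  obtain ⟨C, hCγ, D, hDδ, hC0, hCD, hx, hy⟩ := hb.exists_le_mapDomain_le_one hγ
  obtain ⟨γ', rfl⟩ := exists_add_of_le hCγ
  obtain ⟨δ', rfl⟩ := exists_add_of_le hDδ
  have hrest : linearCombination ℕ (exponent edge) γ' = linearCombination ℕ (exponent edge) δ' := by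
    rw [map_add, map_add, linearCombination_exponent_eq_iff.2 hCD] at h
    exact add_left_cancel h
  have hsplit : monomial (C + γ') (1 : k) - monomial (D + δ') 1 =
      monomial γ' 1 * (monomial C 1 - monomial D 1) +
        monomial D 1 * (monomial γ' 1 - monomial δ' 1) := by
    simp only [mul_sub, monomial_mul, one_mul]
    rw [add_comm γ' C, add_comm γ' D]
    abel
  rw [hsplit]
  exact add_mem (Ideal.mul_mem_left _ _ (Ideal.subset_span
    (monomial_sub_monomial_mem_generators hCD hx hy)))
    (Ideal.mul_mem_left _ _ (ih γ' (lt_add_of_pos_left γ' (pos_iff_ne_zero.2 hC0)) hrest))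

end

end Rees

theorem ker_reesPsi_generated_by_squarefree_binomials_general (k : Type*) [Field k] (n m q : ℕ)
    (edge : Fin q → Fin n × Fin m) :
    ∃ B : Set (MvPolynomial (Sum (Sum (Fin n) (Fin m)) (Fin q)) k),
      (∀ f ∈ B, ∃ α β : (Sum (Sum (Fin n) (Fin m)) (Fin q)) →₀ ℕ,
        f = monomial α 1 - monomial β 1 ∧
        (∀ s, α s ≤ 1) ∧ (∀ s, β s ≤ 1) ∧
        (∑ i : Fin n, α (Sum.inl (Sum.inl i))) ≤ 1 ∧
        (∑ j : Fin m, α (Sum.inl (Sum.inr j))) ≤ 1 ∧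
        (∑ i : Fin n, β (Sum.inl (Sum.inl i))) ≤ 1 ∧
        (∑ j : Fin m, β (Sum.inl (Sum.inr j))) ≤ 1) ∧
      RingHom.ker (reesPsi k n m edge) = Ideal.span B := by
  refine ⟨Rees.generators k n m edge, fun f hf => hf.2,
    le_antisymm ?_ (Ideal.span_le.2 fun f hf => hf.1)⟩
  rw [ker_eq_span_binomials _ _ (Rees.reesPsi_monomial edge), Ideal.span_le]
  rintro _ ⟨γ, δ, h, rfl⟩
  exact Rees.monomial_sub_monomial_mem_span_generators h

/-- The defining ideal `𝒬 = ker ψ` of the Rees algebra of the edge ideal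
of a bipartite graph `G` is generated by binomials `m₁ − m₂` in which both monomials are
squarefree and have degree at most `1` in the `x`-variables and degree at most `1` in the
`y`-variables. -/
theorem ker_reesPsi_generated_by_squarefree_binomials (k : Type*) [Field k] (n m q : ℕ)
    (edge : Fin q → Fin n × Fin m) (hedge : Function.Injective edge) :
    ∃ B : Set (MvPolynomial (Sum (Sum (Fin n) (Fin m)) (Fin q)) k),
      (∀ f ∈ B, ∃ α β : (Sum (Sum (Fin n) (Fin m)) (Fin q)) →₀ ℕ,
        f = monomial α 1 - monomial β 1 ∧
        (∀ s, α s ≤ 1) ∧ (∀ s, β s ≤ 1) ∧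
        (∑ i : Fin n, α (Sum.inl (Sum.inl i))) ≤ 1 ∧
        (∑ j : Fin m, α (Sum.inl (Sum.inr j))) ≤ 1 ∧
        (∑ i : Fin n, β (Sum.inl (Sum.inl i))) ≤ 1 ∧
        (∑ j : Fin m, β (Sum.inl (Sum.inr j))) ≤ 1) ∧
      RingHom.ker (reesPsi k n m edge) = Ideal.span B :=
  ker_reesPsi_generated_by_squarefree_binomials_general k n m q edge
end

section
/- Let π : S → R[z] be the k-algebra homomorphism with π(x_i) = x_i z, π(y_j) = y_j z, and π(T_ℓ) = f_ℓ (where R[z] is a polynomial ring in one new variable z over R). Then ker ψ = ker π; that is, the defining ideal of the Rees algebra R[It] coincides with the toric ideal of the monomial subring k[C(G)] of the cone graph C(G). -/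
/-!
Both `ψ` and `π` send every variable to a monomial, and on a monomial `x^a y^b T^c` of `S` they
produce the same exponent vector `u` of the vertex variables; the extra variable gets exponent
`s = |c|` under `ψ` and `|a| + |b| = |u| - 2 s` under `π`. So, once `k[x, y, z]` is embedded in the
Laurent polynomial ring, `π` is `ψ` followed by the substitution induced by the injective lattice
map `(u, s) ↦ (u, |u| - 2 s)`, and the two kernels agree.
-/

open MvPolynomial

/-- The `k`-algebra map `π : S → R[z]` onto the monomial subring of the cone graph `C(G)`:
`x_i ↦ x_i z`, `y_j ↦ y_j z`, `T_e ↦ x y` (the product of the endpoints of the edge `e`).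
Here `Sum.inr ()` plays the role of the cone vertex variable `z`. -/
noncomputable def conePi (k : Type*) [CommSemiring k] (n m : ℕ) {E : Type*}
    (edge : E → Fin n × Fin m) :
    MvPolynomial (Sum (Sum (Fin n) (Fin m)) E) k →ₐ[k]
      MvPolynomial (Sum (Sum (Fin n) (Fin m)) Unit) k :=
  aeval fun s =>
    match s with
    | Sum.inl v => X (Sum.inl v) * X (Sum.inr ())
    | Sum.inr e => X (Sum.inl (Sum.inl (edge e).1)) * X (Sum.inl (Sum.inr (edge e).2))

open Function

theorem RingHom.ker_eq_ker_of_comp_eq_comp {A B₁ B₂ C : Type*} [Semiring A] [Semiring B₁]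
    [Semiring B₂] [Semiring C] {f₁ : A →+* B₁} {f₂ : A →+* B₂} {θ₁ : B₁ →+* C} {θ₂ : B₂ →+* C}
    (hθ₁ : Injective θ₁) (hθ₂ : Injective θ₂) (h : θ₁.comp f₁ = θ₂.comp f₂) :
    RingHom.ker f₁ = RingHom.ker f₂ := by
  ext a
  rw [mem_ker, mem_ker, ← map_eq_zero_iff θ₁ hθ₁, ← map_eq_zero_iff θ₂ hθ₂, ← comp_apply, h,
    comp_apply]

namespace MvPolynomial

variable (k : Type*) {σ : Type*} [CommSemiring k]

noncomputable def toLaurent : MvPolynomial σ k →ₐ[k] AddMonoidAlgebra k (σ →₀ ℤ) :=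
  AddMonoidAlgebra.mapDomainAlgHom k k (Finsupp.mapRange.addMonoidHom (Nat.castAddMonoidHom ℤ))

theorem toLaurent_injective : Injective (toLaurent k : MvPolynomial σ k → _) :=
  AddMonoidAlgebra.mapDomain_injective <|
    Finsupp.mapRange_injective _ Nat.cast_zero Nat.cast_injective

@[simp]
theorem toLaurent_X (v : σ) :
    toLaurent k (X v) = AddMonoidAlgebra.single (Finsupp.single v 1) 1 := by
  simp [toLaurent, X, ← single_eq_monomial, AddMonoidAlgebra.mapDomain_single]

end MvPolynomial

namespace Finsupp

variable {σ : Type*}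

noncomputable def shear (z : σ) (L : (σ →₀ ℤ) →+ ℤ) : (σ →₀ ℤ) →+ (σ →₀ ℤ) :=
  AddMonoidHom.id _ + (singleAddHom z).comp L

theorem shear_apply (z : σ) (L : (σ →₀ ℤ) →+ ℤ) (e : σ →₀ ℤ) :
    shear z L e = e + single z (L e) := rfl

theorem shear_injective (z : σ) (L : (σ →₀ ℤ) →+ ℤ) (hz : L (single z 1) ≠ -1) :
    Injective (shear z L) := by
  rw [injective_iff_map_eq_zero]
  intro e he
  have he' : e = single z (-L e) := by
    rw [shear_apply, add_eq_zero_iff_eq_neg] at he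
    exact he.trans (single_neg z (L e)).symm
  have hLe : L e * (1 + L (single z 1)) = 0 := by
    have := congrArg L he'
    rw [← smul_single_one, map_zsmul, smul_eq_mul] at this
    linarith
  have hL : L e = 0 := (mul_eq_zero.mp hLe).resolve_right (by omega)
  rw [he', hL, neg_zero, single_zero]

end Finsupp

section Cone

open Finsupp

variable (V : Type*)

def coneWeight : V ⊕ Unit → ℤ
  | .inl _ => 1
  | .inr _ => -3

/-- `(u, s) ↦ (u, |u| - 2 s)`, on exponents `u` of the vertex variables and `s` of the extra one. -/
noncomputable def reesToCone : (V ⊕ Unit →₀ ℤ) →+ (V ⊕ Unit →₀ ℤ) :=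
  shear (.inr ()) (linearCombination ℤ (coneWeight V)).toAddMonoidHom

theorem reesToCone_single_inl (v : V) :
    reesToCone V (single (.inl v) 1) = single (.inl v) 1 + single (.inr ()) 1 := by
  simp [reesToCone, shear_apply, coneWeight]

theorem reesToCone_single_inr : reesToCone V (single (.inr ()) 1) = single (.inr ()) (-2) := by
  rw [reesToCone, shear_apply, ← single_add]
  simp [coneWeight]

theorem reesToCone_edge (v w : V) :
    reesToCone V (single (.inl v) 1 + single (.inl w) 1 + single (.inr ()) 1) =
      single (.inl v) 1 + single (.inl w) 1 := by
  rw [map_add, map_add, reesToCone_single_inl, reesToCone_single_inl, reesToCone_single_inr,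
    add_add_add_comm, ← single_add, add_assoc, ← single_add]
  simp

theorem reesToCone_injective : Injective (reesToCone V) :=
  shear_injective _ _ (by simp [coneWeight])

end Cone

theorem mapDomain_reesToCone_comp_reesPsi (k : Type*) [CommSemiring k] (n m : ℕ) {E : Type*}
    (edge : E → Fin n × Fin m) :
    ((AddMonoidAlgebra.mapDomainAlgHom k k (reesToCone (Fin n ⊕ Fin m))).comp
      (toLaurent k)).comp (reesPsi k n m edge) = (toLaurent k).comp (conePi k n m edge) := by
  apply algHom_ext
  rintro (v | e)
  · simp [reesPsi, conePi, AddMonoidAlgebra.mapDomain_single, reesToCone_single_inl]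
  · simp [reesPsi, conePi, AddMonoidAlgebra.mapDomain_single, reesToCone_edge]

theorem ker_reesPsi_eq_ker_conePi_general (k : Type*) [Field k] (n m q : ℕ)
    (edge : Fin q → Fin n × Fin m) :
    RingHom.ker (reesPsi k n m edge) = RingHom.ker (conePi k n m edge) :=
  RingHom.ker_eq_ker_of_comp_eq_comp
    ((AddMonoidAlgebra.mapDomain_injective (reesToCone_injective _)).comp (toLaurent_injective k))
    (toLaurent_injective k)
    (congrArg AlgHom.toRingHom (mapDomain_reesToCone_comp_reesPsi k n m edge))

/-- `ker ψ = ker π`: the defining ideal of the Rees algebra `R[It]`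
coincides with the toric ideal of the monomial subring `k[C(G)]` of the cone graph. -/
theorem ker_reesPsi_eq_ker_conePi (k : Type*) [Field k] (n m q : ℕ)
    (edge : Fin q → Fin n × Fin m) (hedge : Function.Injective edge) :
    RingHom.ker (reesPsi k n m edge) = RingHom.ker (conePi k n m edge) :=
  ker_reesPsi_eq_ker_conePi_general k n m q edge
end

section
/- There is a k-algebra isomorphism from the Rees algebra R[It] ⊆ R[t] onto the monomial subring k[C(G)] ⊆ R[z], namely the restriction of the homomorphism φ : R[t] → R[z, z^{-1}] defined by φ(x_i) = x_i z, φ(y_j) = y_j z, φ(t) = z^{-2}. -/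
open MvPolynomial

/-- The edge ideal `I(G) ⊆ R = k[x_1,…,x_n,y_1,…,y_m]` of the bipartite graph whose edges
are given by `edge : E → Fin n × Fin m`. -/
noncomputable def edgeIdeal (k : Type*) [CommSemiring k] (n m : ℕ) {E : Type*}
    (edge : E → Fin n × Fin m) : Ideal (MvPolynomial (Sum (Fin n) (Fin m)) k) :=
  Ideal.span (Set.range fun e : E => X (Sum.inl (edge e).1) * X (Sum.inr (edge e).2))

/-- The `k`-algebra map `φ : R[t] → R[z,z⁻¹]` with `φ(x_i) = x_i z`, `φ(y_j) = y_j z`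
and `φ(t) = z⁻²`. -/
noncomputable def laurentPhi (k : Type*) [CommRing k] (n m : ℕ) :
    Polynomial (MvPolynomial (Sum (Fin n) (Fin m)) k) →ₐ[k]
      LaurentPolynomial (MvPolynomial (Sum (Fin n) (Fin m)) k) :=
  Polynomial.eval₂AlgHom
    (aeval fun v : Sum (Fin n) (Fin m) =>
      LaurentPolynomial.C (X v) * LaurentPolynomial.T 1)
    (LaurentPolynomial.T (-2)) (fun _ => Commute.all _ _)

/-- The canonical embedding `R[z] → R[z,z⁻¹]` (sending each `x_i, y_j` to itself and the
polynomial variable `z` to `z`). -/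
noncomputable def laurentIota (k : Type*) [CommRing k] (n m : ℕ) :
    Polynomial (MvPolynomial (Sum (Fin n) (Fin m)) k) →ₐ[k]
      LaurentPolynomial (MvPolynomial (Sum (Fin n) (Fin m)) k) :=
  Polynomial.eval₂AlgHom
    (aeval fun v : Sum (Fin n) (Fin m) => LaurentPolynomial.C (X v))
    (LaurentPolynomial.T 1) (fun _ => Commute.all _ _)

/-- The monomial subring `k[C(G)] ⊆ R[z]` of the cone graph `C(G)`: the `k`-subalgebra
generated by the monomials `x_i y_j` over the edges `{x_i,y_j}` of `G` together with
`x_i z` (1 ≤ i ≤ n) and `y_j z` (1 ≤ j ≤ m). -/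
noncomputable def coneMonomialSubring (k : Type*) [CommRing k] (n m : ℕ) {E : Type*}
    (edge : E → Fin n × Fin m) :
    Subalgebra k (Polynomial (MvPolynomial (Sum (Fin n) (Fin m)) k)) :=
  Algebra.adjoin k
    ({p | ∃ e : E, p = Polynomial.C (X (Sum.inl (edge e).1) * X (Sum.inr (edge e).2))} ∪
      Set.range fun v : Sum (Fin n) (Fin m) => Polynomial.C (X v) * Polynomial.X)

/-!
The Rees algebra of `I = (f_e)` is generated over `k` by the variables `x_v` and the degree-one
elements `f_e t`. Since `φ(x_v) = x_v z` and `φ(x_i y_j t) = x_i y_j`, `φ` maps these generators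
exactly onto the generators of `k[C(G)]`. Injectivity holds on all of `R[t]`: the ring
endomorphism `ψ` of `R[z,z⁻¹]` with `ψ(x_v) = x_v z` and `ψ(z) = z⁻¹` satisfies
`ψ(φ(x_v)) = x_v` and `ψ(φ(t)) = z²`, so `ψ ∘ φ` is the injective substitution `t ↦ z²`.
-/

theorem restrictScalars_reesAlgebra_span_eq_adjoin {k R : Type*} [CommSemiring k] [CommRing R]
    [Algebra k R] {S : Set R} (hS : Algebra.adjoin k S = ⊤) (T : Set R) :
    (reesAlgebra (Ideal.span T)).restrictScalars k =
      Algebra.adjoin k (Polynomial.C '' S ∪ Polynomial.monomial 1 '' T) := by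
  rw [← adjoin_monomial_eq_reesAlgebra, Ideal.span, Submodule.map_span, Algebra.adjoin_span]
  exact Algebra.adjoin_eq_adjoin_union (R := k) S _ hS

section

variable (k : Type*) [CommRing k] (n m : ℕ)

noncomputable def laurentPsi :
    LaurentPolynomial (MvPolynomial (Sum (Fin n) (Fin m)) k) →+*
      LaurentPolynomial (MvPolynomial (Sum (Fin n) (Fin m)) k) :=
  LaurentPolynomial.eval₂
    (aeval fun v : Sum (Fin n) (Fin m) => LaurentPolynomial.C (X v) * LaurentPolynomial.T 1 :
      MvPolynomial (Sum (Fin n) (Fin m)) k →ₐ[k] _).toRingHom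
    (LaurentPolynomial.isUnit_T 1).unit⁻¹

lemma laurentPsi_comp_aeval :
    (laurentPsi k n m).comp
        (aeval fun v : Sum (Fin n) (Fin m) => LaurentPolynomial.C (X v) * LaurentPolynomial.T 1 :
          MvPolynomial (Sum (Fin n) (Fin m)) k →ₐ[k] _).toRingHom =
      LaurentPolynomial.C := by
  apply MvPolynomial.ringHom_ext
  · intro c
    simp [laurentPsi, LaurentPolynomial.algebraMap_apply, MvPolynomial.algebraMap_eq]
  · intro v
    simp [laurentPsi, mul_assoc]

lemma laurentPsi_comp_laurentPhi :
    (laurentPsi k n m).comp (laurentPhi k n m).toRingHom =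
      Polynomial.toLaurent.comp (Polynomial.expand _ 2).toRingHom := by
  apply Polynomial.ringHom_ext
  · intro r
    simpa [laurentPhi] using RingHom.congr_fun (laurentPsi_comp_aeval k n m) r
  · simp [laurentPhi, laurentPsi]

lemma laurentPhi_injective : Function.Injective (laurentPhi k n m) := by
  have key (p) : laurentPsi k n m (laurentPhi k n m p) = (Polynomial.expand _ 2 p).toLaurent :=
    RingHom.congr_fun (laurentPsi_comp_laurentPhi k n m) p
  intro p q hpq
  exact Polynomial.expand_injective two_pos
    (Polynomial.toLaurent_injective (by rw [← key, ← key, hpq]))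

lemma laurentPhi_C_X (v : Sum (Fin n) (Fin m)) :
    laurentPhi k n m (Polynomial.C (X v)) =
      laurentIota k n m (Polynomial.C (X v) * Polynomial.X) := by
  simp [laurentPhi, laurentIota]

lemma laurentPhi_monomial_one_X_mul_X (v w : Sum (Fin n) (Fin m)) :
    laurentPhi k n m (Polynomial.monomial 1 (X v * X w)) =
      laurentIota k n m (Polynomial.C (X v * X w)) := by
  simp only [laurentPhi, laurentIota, ← Polynomial.C_mul_X_eq_monomial, map_mul,
    Polynomial.eval₂AlgHom_apply, Polynomial.eval₂_C, Polynomial.eval₂_X,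
    RingHom.coe_coe, aeval_X]
  rw [mul_mul_mul_comm, mul_assoc, ← LaurentPolynomial.T_add, ← LaurentPolynomial.T_add]
  simp

end

theorem reesAlgebra_isom_coneMonomialSubring_general (k : Type*) [Field k] (n m q : ℕ)
    (edge : Fin q → Fin n × Fin m) :
    Set.InjOn (laurentPhi k n m)
      ↑(Subalgebra.restrictScalars k (reesAlgebra (edgeIdeal k n m edge))) ∧
    Subalgebra.map (laurentPhi k n m)
        (Subalgebra.restrictScalars k (reesAlgebra (edgeIdeal k n m edge))) =
      Subalgebra.map (laurentIota k n m) (coneMonomialSubring k n m edge) := by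
  refine ⟨(laurentPhi_injective k n m).injOn, ?_⟩
  rw [edgeIdeal, restrictScalars_reesAlgebra_span_eq_adjoin (MvPolynomial.adjoin_range_X),
    coneMonomialSubring, AlgHom.map_adjoin, AlgHom.map_adjoin, Set.union_comm]
  have hedges : {p : Polynomial (MvPolynomial (Sum (Fin n) (Fin m)) k) | ∃ e : Fin q,
      p = Polynomial.C (X (Sum.inl (edge e).1) * X (Sum.inr (edge e).2))} =
      Set.range fun e => Polynomial.C (X (Sum.inl (edge e).1) * X (Sum.inr (edge e).2)) := by
    ext; simp [eq_comm]
  simp only [hedges, Set.image_union, ← Set.range_comp]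
  congr 1
  exact congrArg₂ (· ∪ ·)
    (congrArg Set.range (funext fun e => laurentPhi_monomial_one_X_mul_X k n m _ _))
    (congrArg Set.range (funext (laurentPhi_C_X k n m)))

/-- The restriction of `φ : R[t] → R[z,z⁻¹]`, `φ(x_i) = x_i z`,
`φ(y_j) = y_j z`, `φ(t) = z⁻²`, is a `k`-algebra isomorphism from the Rees algebra
`R[It] = ⊕_{s≥0} I^s t^s ⊆ R[t]` onto the monomial subring `k[C(G)] ⊆ R[z]` of the cone
graph: it is injective on `R[It]` and maps `R[It]` onto (the image in `R[z,z⁻¹]` of)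
`k[C(G)]`. -/
theorem reesAlgebra_isom_coneMonomialSubring (k : Type*) [Field k] (n m q : ℕ)
    (edge : Fin q → Fin n × Fin m) (hedge : Function.Injective edge) :
    Set.InjOn (laurentPhi k n m)
      ↑(Subalgebra.restrictScalars k (reesAlgebra (edgeIdeal k n m edge))) ∧
    Subalgebra.map (laurentPhi k n m)
        (Subalgebra.restrictScalars k (reesAlgebra (edgeIdeal k n m edge))) =
      Subalgebra.map (laurentIota k n m) (coneMonomialSubring k n m edge) :=
  reesAlgebra_isom_coneMonomialSubring_general k n m q edge
end

section
/- Let G be the complete bipartite graph on the bipartition X = {x_1,…,x_n}, Y = {y_1,…,y_m} (every x_i is adjacent to every y_j). Then the defining ideal 𝒬 = ker ψ of the Rees algebra of the edge ideal I(G) is generated by the binomials T_{w+} − T_{w−} for even cycles w of G together with the binomials v_0 T_{w+} − v_a T_{w−} for paths w = (v_0,…,v_a) of even length a in G; in particular, 𝒬 is generated by binomials whose monomials have total degree at most 1 in the variables x_1,…,x_n,y_1,…,y_m. -/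
open MvPolynomial

/-!
`ψ` is a monomial map: it sends the monomial with exponent `α` to the monomial with exponent
`Φ α`, for an additive map `Φ`. The kernel of any monomial map is spanned by the binomials
`x^α - x^β` with `Φ α = Φ β`, so it suffices to show that two monomials in the same fibre of `Φ`
are congruent modulo the ideal `J` spanned by the walk binomials. By induction on the degree, it
is enough to move, modulo `J`, some variable of `x^β` into `x^α` and cancel it. A vertex variable
of an edge-free `x^β` already divides `x^α`. An edge variable `T_{pq}` of `x^β` is brought into
`x^α` in two exchanges: the path binomials `x_p T_{ij} - x_i T_{pj}` provide a variable `T_{pj}`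
in row `p`, and `y_q T_{pj} - y_j T_{pq}` or the `4`-cycle binomials `T_{pj} T_{iq} - T_{ij} T_{pq}`
turn it into `T_{pq}`. Conversely, for an even walk both `v_0 T_{w+}` and `v_a T_{w-}` map to
`v_0 ⋯ v_a t^{a/2}`.
-/

namespace Finsupp

theorem linearCombination_nat_apply_ne_zero_iff {σ τ : Type*} (φ : σ → τ →₀ ℕ)
    (α : σ →₀ ℕ) (u : τ) :
    linearCombination ℕ φ α u ≠ 0 ↔ ∃ s, α s ≠ 0 ∧ φ s u ≠ 0 := by
  classical
  simp [linearCombination_apply, Finsupp.sum, finsetSum_apply]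

end Finsupp

namespace MvPolynomial

variable {R σ τ : Type*} [CommRing R] (φ : σ → τ →₀ ℕ)

theorem aeval_monomial_monomial_one (α : σ →₀ ℕ) (c : R) :
    aeval (fun s => monomial (φ s) (1 : R)) (monomial α c) =
      monomial (Finsupp.linearCombination ℕ φ α) c := by
  simp only [aeval_monomial, monomial_pow, one_pow, Finsupp.linearCombination_apply,
    monomial_finsupp_sum_index, algebraMap_eq]

theorem linearCombination_eq_of_monomial_sub_mem_ker [Nontrivial R] {α β : σ →₀ ℕ}
    (h : monomial α (1 : R) - monomial β 1 ∈ RingHom.ker (aeval fun s => monomial (φ s) (1 : R))) :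
    Finsupp.linearCombination ℕ φ α = Finsupp.linearCombination ℕ φ β := by
  rw [RingHom.mem_ker, map_sub, aeval_monomial_monomial_one, aeval_monomial_monomial_one,
    sub_eq_zero] at h
  exact monomial_left_injective one_ne_zero h

theorem ker_aeval_monomial_one :
    RingHom.ker (aeval fun s => monomial (φ s) (1 : R)) =
      Ideal.span {f : MvPolynomial σ R | ∃ α β,
        Finsupp.linearCombination ℕ φ α = Finsupp.linearCombination ℕ φ β ∧
          f = monomial α 1 - monomial β 1} := by
  refine le_antisymm (fun f hf => ?_) (Ideal.span_le.mpr ?_)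
  · let r := Function.invFun (Finsupp.linearCombination ℕ φ)
    let ρ : MvPolynomial τ R →ₗ[R] MvPolynomial σ R := AddMonoidAlgebra.mapDomainLinearMap R R r
    have hρ : ∀ γ c, ρ (monomial γ c) = monomial (r γ) c := fun γ c =>
      AddMonoidAlgebra.mapDomainLinearMap_single _ _ _
    -- `r ∘ Φ` picks one monomial in each fibre of `Φ`; summing the coefficients of `f` fibrewise
    -- is `ρ ∘ ψ`, which kills `f`.
    have h0 : ∑ α ∈ f.support,
        monomial (r (Finsupp.linearCombination ℕ φ α)) (coeff α f) = 0 := by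
      have := congrArg ρ (RingHom.mem_ker.mp hf)
      rwa [f.as_sum, map_sum, map_sum, map_zero, Finset.sum_congr rfl fun α _ => by
        rw [aeval_monomial_monomial_one, hρ]] at this
    have hf_eq : f = ∑ α ∈ f.support,
        C (coeff α f) * (monomial α 1 - monomial (r (Finsupp.linearCombination ℕ φ α)) 1) := by
      simp only [mul_sub, C_mul_monomial, mul_one, Finset.sum_sub_distrib, h0, sub_zero]
      exact f.as_sum
    rw [hf_eq]
    refine Ideal.sum_mem _ fun α _ => Ideal.mul_mem_left _ _ (Ideal.subset_span ?_)
    exact ⟨α, _, (Function.invFun_eq ⟨α, rfl⟩).symm, rfl⟩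
  · rintro _ ⟨α, β, h, rfl⟩
    rw [SetLike.mem_coe, RingHom.mem_ker, map_sub, aeval_monomial_monomial_one,
      aeval_monomial_monomial_one, h, sub_self]

theorem ker_aeval_monomial_one_eq_of_exchange [Nontrivial R] (hφ : ∀ s, φ s ≠ 0)
    (J : Ideal (MvPolynomial σ R)) (hJ : J ≤ RingHom.ker (aeval fun s => monomial (φ s) (1 : R)))
    (hexch : ∀ α β, Finsupp.linearCombination ℕ φ α = Finsupp.linearCombination ℕ φ β → β ≠ 0 →
      ∃ s α', β s ≠ 0 ∧ α' s ≠ 0 ∧ monomial α (1 : R) - monomial α' 1 ∈ J) :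
    RingHom.ker (aeval fun s => monomial (φ s) (1 : R)) = J := by
  refine le_antisymm ?_ hJ
  suffices H : ∀ d (α β : σ →₀ ℕ), β.degree = d →
      Finsupp.linearCombination ℕ φ α = Finsupp.linearCombination ℕ φ β →
      monomial α (1 : R) - monomial β 1 ∈ J by
    rw [ker_aeval_monomial_one, Ideal.span_le]
    rintro _ ⟨α, β, h, rfl⟩
    exact H _ α β rfl h
  intro d
  induction d using Nat.strong_induction_on with
  | _ d ih =>
  intro α β hd hΦ
  obtain rfl | hβ := eq_or_ne β 0
  · obtain rfl : α = 0 := by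
      by_contra hα
      obtain ⟨s, hs⟩ := Finsupp.ne_iff.mp hα
      obtain ⟨u, hu⟩ := Finsupp.ne_iff.mp (hφ s)
      exact (Finsupp.linearCombination_nat_apply_ne_zero_iff φ α u).mpr ⟨s, hs, hu⟩
        (by rw [hΦ, map_zero, Finsupp.coe_zero, Pi.zero_apply])
    rw [sub_self]
    exact J.zero_mem
  obtain ⟨s, α', hβs, hα's, hαα'⟩ := hexch α β hΦ hβ
  obtain ⟨γ, rfl⟩ := exists_add_of_le (Finsupp.single_le_iff.mpr (Nat.one_le_iff_ne_zero.mpr hα's))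
  obtain ⟨δ, rfl⟩ := exists_add_of_le (Finsupp.single_le_iff.mpr (Nat.one_le_iff_ne_zero.mpr hβs))
  have hγδ : Finsupp.linearCombination ℕ φ γ = Finsupp.linearCombination ℕ φ δ := by
    have := (linearCombination_eq_of_monomial_sub_mem_ker φ (hJ hαα')).symm.trans hΦ
    rwa [map_add, map_add, add_right_inj] at this
  have hδ : monomial γ (1 : R) - monomial δ 1 ∈ J :=
    ih δ.degree (by simp [← hd, map_add]) γ δ rfl hγδ
  have hcancel : monomial (Finsupp.single s 1 + γ) (1 : R) - monomial (Finsupp.single s 1 + δ) 1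
      = X s * (monomial γ 1 - monomial δ 1) := by
    rw [mul_sub, X, monomial_mul, monomial_mul, one_mul]
  rw [← sub_add_sub_cancel, hcancel]
  exact add_mem hαα' (J.mul_mem_left _ hδ)

theorem exists_monomial_sub_mem_of_X_mul_X_sub_mem {J : Ideal (MvPolynomial σ R)}
    {α : σ →₀ ℕ} {a b a' b' : σ} (hab : a ≠ b) (ha : α a ≠ 0) (hb : α b ≠ 0)
    (h : X a * X b - X a' * X b' ∈ J) :
    ∃ α', monomial α (1 : R) - monomial α' 1 ∈ J ∧ α' b' ≠ 0 := by
  have hle : Finsupp.single a 1 + Finsupp.single b 1 ≤ α := by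
    classical
    intro u
    simp only [Finsupp.coe_add, Pi.add_apply, Finsupp.single_apply]
    split_ifs <;> subst_vars <;> first | exact (hab rfl).elim | omega
  obtain ⟨γ, rfl⟩ := exists_add_of_le hle
  refine ⟨Finsupp.single a' 1 + Finsupp.single b' 1 + γ, ?_, by simp⟩
  have : monomial (Finsupp.single a 1 + Finsupp.single b 1 + γ) (1 : R)
      - monomial (Finsupp.single a' 1 + Finsupp.single b' 1 + γ) 1
      = (X a * X b - X a' * X b') * monomial γ 1 := by
    simp only [sub_mul, X, monomial_mul, mul_one]
  rw [this]
  exact J.mul_mem_right _ h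

theorem exists_prod_eq_monomial_of_forall_eq_X_inr {V E ι : Type*} (s : Finset ι)
    (f : ι → MvPolynomial (Sum V E) R) (hf : ∀ i, f i = 1 ∨ ∃ e, f i = X (Sum.inr e)) :
    ∃ δ : Sum V E →₀ ℕ, ∏ i ∈ s, f i = monomial δ 1 ∧ ∀ v, δ (Sum.inl v) = 0 := by
  refine Finset.prod_induction _ (fun p => ∃ δ : Sum V E →₀ ℕ, p = monomial δ 1 ∧
    ∀ v, δ (Sum.inl v) = 0) ?_ ⟨0, rfl, fun _ => rfl⟩ fun i _ => ?_
  · rintro _ _ ⟨δ, rfl, hδ⟩ ⟨δ', rfl, hδ'⟩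
    exact ⟨δ + δ', by rw [monomial_mul, one_mul], fun v => by simp [hδ, hδ']⟩
  · rcases hf i with h | ⟨e, h⟩ <;> rw [h]
    · exact ⟨0, rfl, fun _ => rfl⟩
    · exact ⟨Finsupp.single (Sum.inr e) 1, rfl, fun v => by simp⟩

end MvPolynomial

namespace Finset

theorem mul_prod_range_odd_eq_mul_prod_range_even {M : Type*} [CommMonoid M] (f : ℕ → M)
    (c : M) (ℓ : ℕ) :
    f 0 * ∏ j ∈ range (2 * ℓ), (if j % 2 = 1 then f j * f (j + 1) * c else 1) =
      f (2 * ℓ) * ∏ j ∈ range (2 * ℓ), (if j % 2 = 0 then f j * f (j + 1) * c else 1) := by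
  induction ℓ with
  | zero => simp
  | succ ℓ ih =>
    rw [show 2 * (ℓ + 1) = 2 * ℓ + 1 + 1 by ring, prod_range_succ, prod_range_succ,
      prod_range_succ, prod_range_succ, if_neg (by omega), if_pos (by omega),
      if_pos (by omega), if_neg (by omega), mul_one, mul_one, ← mul_assoc, ih]
    ac_rfl

end Finset

namespace BipWalk

variable {k : Type*} [CommRing k] {n m a : ℕ} {E : Type*} {edge : E → Fin n × Fin m}

-- Indexed by `ℕ` so that `j + 1` makes sense; indices past `a` wrap around and are never used.
variable (k) in
noncomputable def vertexVar (w : BipWalk n m edge a) (j : ℕ) :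
    MvPolynomial (Sum (Sum (Fin n) (Fin m)) Unit) k :=
  X (Sum.inl (w.vert (Fin.ofNat (a + 1) j)))

theorem reesPsi_X_edgeIdx (w : BipWalk n m edge a) (j : Fin a) :
    reesPsi k n m edge (X (Sum.inr (w.edgeIdx j))) =
      w.vertexVar k j * w.vertexVar k (j + 1) * X (Sum.inr ()) := by
  have hcast : Fin.ofNat (a + 1) j = j.castSucc := Fin.ext (by simp)
  have hcast' : Fin.ofNat (a + 1) (j + 1) = j.succ := Fin.ext (by simp)
  rw [vertexVar, vertexVar, hcast, hcast', reesPsi, aeval_X]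
  rcases w.incident j with ⟨h0, h1⟩ | ⟨h0, h1⟩ <;> rw [h0, h1]
  ring

theorem reesPsi_Tplus (w : BipWalk n m edge a) :
    reesPsi k n m edge (Tplus k w) = ∏ j ∈ Finset.range a,
      if j % 2 = 1 then w.vertexVar k j * w.vertexVar k (j + 1) * X (Sum.inr ()) else 1 := by
  rw [Tplus, map_prod, ← Fin.prod_univ_eq_prod_range]
  simp only [apply_ite (reesPsi k n m edge), map_one, reesPsi_X_edgeIdx]

theorem reesPsi_Tminus (w : BipWalk n m edge a) :
    reesPsi k n m edge (Tminus k w) = ∏ j ∈ Finset.range a,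
      if j % 2 = 0 then w.vertexVar k j * w.vertexVar k (j + 1) * X (Sum.inr ()) else 1 := by
  rw [Tminus, map_prod, ← Fin.prod_univ_eq_prod_range]
  simp only [apply_ite (reesPsi k n m edge), map_one, reesPsi_X_edgeIdx]

theorem X_vert_zero_mul_reesPsi_Tplus (w : BipWalk n m edge a) (ha : Even a) :
    X (Sum.inl (w.vert 0)) * reesPsi k n m edge (Tplus k w) =
      X (Sum.inl (w.vert (Fin.last a))) * reesPsi k n m edge (Tminus k w) := by
  obtain ⟨ℓ, rfl⟩ := even_iff_two_dvd.mp ha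
  have := Finset.mul_prod_range_odd_eq_mul_prod_range_even (w.vertexVar k) (X (Sum.inr ())) ℓ
  rwa [← reesPsi_Tplus, ← reesPsi_Tminus, vertexVar, vertexVar, Fin.ofNat_zero,
    show Fin.ofNat (2 * ℓ + 1) (2 * ℓ) = Fin.last (2 * ℓ) from Fin.ext (by simp)] at this

end BipWalk

section WalkBinomials

variable (k : Type*) [CommRing k] (n m : ℕ) {E : Type*} (edge : E → Fin n × Fin m)

def walkBinomials : Set (MvPolynomial (Sum (Sum (Fin n) (Fin m)) E) k) :=
  {f | (∃ (ℓ : ℕ) (w : BipWalk n m edge (2 * ℓ)),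
          w.vert (Fin.last (2 * ℓ)) = w.vert 0 ∧
          (Function.Injective fun j : Fin (2 * ℓ) => w.vert j.castSucc) ∧
          f = Tplus k w - Tminus k w) ∨
        (∃ (a : ℕ) (w : BipWalk n m edge a),
          Even a ∧ Function.Injective w.vert ∧
          f = X (Sum.inl (w.vert 0)) * Tplus k w -
              X (Sum.inl (w.vert (Fin.last a))) * Tminus k w)}

theorem reesPsi_X_inl (v : Sum (Fin n) (Fin m)) :
    reesPsi k n m edge (X (Sum.inl v)) = X (Sum.inl v) :=
  aeval_X _ _

theorem walkBinomials_subset_ker :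
    walkBinomials k n m edge ⊆ RingHom.ker (reesPsi k n m edge) := by
  rintro f (⟨ℓ, w, hclosed, -, rfl⟩ | ⟨a, w, ha, -, rfl⟩) <;>
    rw [SetLike.mem_coe, RingHom.mem_ker, map_sub]
  · have h := w.X_vert_zero_mul_reesPsi_Tplus (k := k) (even_two_mul ℓ)
    rw [hclosed] at h
    rw [X_mul_cancel_left_iff.mp h, sub_self]
  · rw [map_mul, map_mul, reesPsi_X_inl, reesPsi_X_inl, w.X_vert_zero_mul_reesPsi_Tplus ha,
      sub_self]

theorem BipWalk.exists_Tplus_eq_monomial {a : ℕ} (w : BipWalk n m edge a) :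
    ∃ δ, Tplus k w = monomial δ 1 ∧ ∀ v, δ (Sum.inl v) = 0 :=
  exists_prod_eq_monomial_of_forall_eq_X_inr _ _ fun j => by
    split_ifs; exacts [Or.inr ⟨_, rfl⟩, Or.inl rfl]

theorem BipWalk.exists_Tminus_eq_monomial {a : ℕ} (w : BipWalk n m edge a) :
    ∃ δ, Tminus k w = monomial δ 1 ∧ ∀ v, δ (Sum.inl v) = 0 :=
  exists_prod_eq_monomial_of_forall_eq_X_inr _ _ fun j => by
    split_ifs; exacts [Or.inr ⟨_, rfl⟩, Or.inl rfl]

theorem exists_eq_monomial_sub_monomial_of_mem_walkBinomials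
    {f : MvPolynomial (Sum (Sum (Fin n) (Fin m)) E) k} (hf : f ∈ walkBinomials k n m edge) :
    ∃ α β : Sum (Sum (Fin n) (Fin m)) E →₀ ℕ, f = monomial α 1 - monomial β 1 ∧
      (∑ v : Sum (Fin n) (Fin m), α (Sum.inl v)) ≤ 1 ∧
      (∑ v : Sum (Fin n) (Fin m), β (Sum.inl v)) ≤ 1 := by
  classical
  rcases hf with ⟨ℓ, w, -, -, rfl⟩ | ⟨a, w, -, -, rfl⟩
  · obtain ⟨δ, hδ, hδv⟩ := w.exists_Tplus_eq_monomial k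
    obtain ⟨δ', hδ', hδ'v⟩ := w.exists_Tminus_eq_monomial k
    exact ⟨δ, δ', by rw [hδ, hδ'], by simp [hδv], by simp [hδ'v]⟩
  · obtain ⟨δ, hδ, hδv⟩ := w.exists_Tplus_eq_monomial k
    obtain ⟨δ', hδ', hδ'v⟩ := w.exists_Tminus_eq_monomial k
    refine ⟨Finsupp.single (Sum.inl (w.vert 0)) 1 + δ,
      Finsupp.single (Sum.inl (w.vert (Fin.last a))) 1 + δ', ?_, ?_, ?_⟩
    · rw [hδ, hδ', X, X, monomial_mul, monomial_mul, one_mul]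
    · simp [hδv, Finsupp.single_apply, -Fintype.sum_sum_type]
    · simp [hδ'v, Finsupp.single_apply, -Fintype.sum_sum_type]

end WalkBinomials

namespace CompleteBipartite

variable {k : Type*} [CommRing k] {n m : ℕ}
  {α β : Sum (Sum (Fin n) (Fin m)) (Fin n × Fin m) →₀ ℕ}

noncomputable def reesExponent :
    Sum (Sum (Fin n) (Fin m)) (Fin n × Fin m) → Sum (Sum (Fin n) (Fin m)) Unit →₀ ℕ
  | .inl v => Finsupp.single (.inl v) 1
  | .inr e => Finsupp.single (.inl (.inl e.1)) 1 + Finsupp.single (.inl (.inr e.2)) 1 +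
      Finsupp.single (.inr ()) 1

noncomputable abbrev reesWeight :
    (Sum (Sum (Fin n) (Fin m)) (Fin n × Fin m) →₀ ℕ) →ₗ[ℕ] Sum (Sum (Fin n) (Fin m)) Unit →₀ ℕ :=
  Finsupp.linearCombination ℕ reesExponent

theorem reesExponent_ne_zero (s : Sum (Sum (Fin n) (Fin m)) (Fin n × Fin m)) :
    reesExponent s ≠ 0 := by
  rcases s with v | e <;> simp [reesExponent]

theorem reesPsi_eq_aeval :
    reesPsi k n m id = aeval fun s => monomial (reesExponent s) 1 := by
  refine algHom_ext fun s => ?_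
  rw [reesPsi, aeval_X, aeval_X]
  rcases s with v | e
  · rfl
  · simp only [X, monomial_mul, reesExponent, one_mul, id]

theorem reesWeight_inr_ne_zero_iff :
    reesWeight α (.inr ()) ≠ 0 ↔ ∃ e, α (.inr e) ≠ 0 := by
  rw [Finsupp.linearCombination_nat_apply_ne_zero_iff]
  simp [reesExponent]

theorem reesWeight_inl_inl_ne_zero_iff {p : Fin n} :
    reesWeight α (.inl (.inl p)) ≠ 0 ↔ α (.inl (.inl p)) ≠ 0 ∨ ∃ q, α (.inr (p, q)) ≠ 0 := by
  classical
  rw [Finsupp.linearCombination_nat_apply_ne_zero_iff]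
  simp [reesExponent, Finsupp.single_apply]

theorem reesWeight_inl_inr_ne_zero_iff {q : Fin m} :
    reesWeight α (.inl (.inr q)) ≠ 0 ↔ α (.inl (.inr q)) ≠ 0 ∨ ∃ p, α (.inr (p, q)) ≠ 0 := by
  classical
  rw [Finsupp.linearCombination_nat_apply_ne_zero_iff]
  simp [reesExponent, Finsupp.single_apply]

variable (k) in
theorem X_inl_inl_mul_X_sub_mem_span (p i : Fin n) (j : Fin m) :
    X (.inl (.inl p)) * X (.inr (i, j)) - X (.inl (.inl i)) * X (.inr (p, j)) ∈
      Ideal.span (walkBinomials k n m id) := by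
  obtain rfl | hpi := eq_or_ne p i
  · rw [sub_self]; exact zero_mem _
  refine Ideal.subset_span (Or.inr ⟨2, ⟨![.inl p, .inr j, .inl i], ![(p, j), (i, j)],
    Fin.forall_fin_two.mpr ⟨.inl ⟨rfl, rfl⟩, .inr ⟨rfl, rfl⟩⟩⟩, even_two, ?_, ?_⟩)
  · intro a b hab
    fin_cases a <;> fin_cases b <;> simp_all [eq_comm]
  · simp [Tplus, Tminus, Fin.prod_univ_two]

variable (k) in
theorem X_inl_inr_mul_X_sub_mem_span (q j : Fin m) (i : Fin n) :
    X (.inl (.inr q)) * X (.inr (i, j)) - X (.inl (.inr j)) * X (.inr (i, q)) ∈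
      Ideal.span (walkBinomials k n m id) := by
  obtain rfl | hqj := eq_or_ne q j
  · rw [sub_self]; exact zero_mem _
  refine Ideal.subset_span (Or.inr ⟨2, ⟨![.inr q, .inl i, .inr j], ![(i, q), (i, j)],
    Fin.forall_fin_two.mpr ⟨.inr ⟨rfl, rfl⟩, .inl ⟨rfl, rfl⟩⟩⟩, even_two, ?_, ?_⟩)
  · intro a b hab
    fin_cases a <;> fin_cases b <;> simp_all [eq_comm]
  · simp [Tplus, Tminus, Fin.prod_univ_two]

variable (k) in
theorem X_inr_mul_X_inr_sub_mem_span (p i : Fin n) (j q : Fin m) :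
    X (.inr (p, j)) * X (.inr (i, q)) - X (.inr (i, j)) * X (.inr (p, q)) ∈
      Ideal.span (walkBinomials k n m id) := by
  obtain rfl | hpi := eq_or_ne p i
  · rw [sub_self]; exact zero_mem _
  obtain rfl | hjq := eq_or_ne j q
  · rw [mul_comm, sub_self]; exact zero_mem _
  let w : BipWalk n m id (2 * 2) :=
    ⟨![.inl p, .inr q, .inl i, .inr j, .inl p], ![(p, q), (i, q), (i, j), (p, j)], by
      intro t; fin_cases t
      exacts [.inl ⟨rfl, rfl⟩, .inr ⟨rfl, rfl⟩, .inl ⟨rfl, rfl⟩, .inr ⟨rfl, rfl⟩]⟩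
  have hinj : Function.Injective fun t : Fin (2 * 2) => w.vert t.castSucc := by
    intro a b hab
    fin_cases a <;> fin_cases b <;> simp_all [w, eq_comm]
  have hcycle : Tplus k w - Tminus k w ∈ Ideal.span (walkBinomials k n m id) :=
    Ideal.subset_span (Or.inl ⟨2, w, rfl, hinj, rfl⟩)
  convert hcycle using 1
  simp [w, Tplus, Tminus, Fin.prod_univ_four]
  ring

theorem reesWeight_eq_of_monomial_sub_mem [Nontrivial k]
    (h : monomial α (1 : k) - monomial β 1 ∈ Ideal.span (walkBinomials k n m id)) :
    reesWeight α = reesWeight β := by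
  refine MvPolynomial.linearCombination_eq_of_monomial_sub_mem_ker (R := k) reesExponent ?_
  rw [← reesPsi_eq_aeval]
  exact Ideal.span_le.mpr (walkBinomials_subset_ker k n m id) h

theorem exists_monomial_sub_mem_span_of_row {p : Fin n} (hedge : ∃ e, α (.inr e) ≠ 0)
    (hp : reesWeight α (.inl (.inl p)) ≠ 0) :
    ∃ α', monomial α (1 : k) - monomial α' 1 ∈ Ideal.span (walkBinomials k n m id) ∧
      ∃ j, α' (.inr (p, j)) ≠ 0 := by
  rcases reesWeight_inl_inl_ne_zero_iff.mp hp with hxp | ⟨j, hj⟩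
  · obtain ⟨⟨i, j⟩, hij⟩ := hedge
    obtain ⟨α', hα', hj⟩ := exists_monomial_sub_mem_of_X_mul_X_sub_mem Sum.inl_ne_inr hxp hij
      (X_inl_inl_mul_X_sub_mem_span k p i j)
    exact ⟨α', hα', j, hj⟩
  · exact ⟨α, by simp, j, hj⟩

theorem exists_monomial_sub_mem_span_of_column {p : Fin n} {j q : Fin m}
    (hpj : α (.inr (p, j)) ≠ 0) (hq : reesWeight α (.inl (.inr q)) ≠ 0) :
    ∃ α', monomial α (1 : k) - monomial α' 1 ∈ Ideal.span (walkBinomials k n m id) ∧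
      α' (.inr (p, q)) ≠ 0 := by
  rcases reesWeight_inl_inr_ne_zero_iff.mp hq with hyq | ⟨i, hiq⟩
  · exact exists_monomial_sub_mem_of_X_mul_X_sub_mem Sum.inl_ne_inr hyq hpj
      (X_inl_inr_mul_X_sub_mem_span k q j p)
  obtain hpjiq | hpjiq := eq_or_ne (p, j) (i, q)
  · obtain ⟨rfl, rfl⟩ := Prod.ext_iff.mp hpjiq
    exact ⟨α, by simp, hpj⟩
  · exact exists_monomial_sub_mem_of_X_mul_X_sub_mem (Sum.inr_injective.ne hpjiq) hpj hiq
      (X_inr_mul_X_inr_sub_mem_span k p i j q)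

theorem exists_monomial_sub_mem_span_of_edge [Nontrivial k]
    (hαβ : reesWeight α = reesWeight β)
    {p : Fin n} {q : Fin m} (hβ : β (.inr (p, q)) ≠ 0) :
    ∃ α', monomial α (1 : k) - monomial α' 1 ∈ Ideal.span (walkBinomials k n m id) ∧
      α' (.inr (p, q)) ≠ 0 := by
  have hedge : ∃ e, α (.inr e) ≠ 0 := by
    rw [← reesWeight_inr_ne_zero_iff, hαβ, reesWeight_inr_ne_zero_iff]
    exact ⟨_, hβ⟩
  have hp : reesWeight α (.inl (.inl p)) ≠ 0 := by
    rw [hαβ, reesWeight_inl_inl_ne_zero_iff]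
    exact .inr ⟨q, hβ⟩
  obtain ⟨α₁, h₁, j, hj⟩ := exists_monomial_sub_mem_span_of_row (k := k) hedge hp
  have hq : reesWeight α₁ (.inl (.inr q)) ≠ 0 := by
    rw [← reesWeight_eq_of_monomial_sub_mem h₁, hαβ, reesWeight_inl_inr_ne_zero_iff]
    exact .inr ⟨p, hβ⟩
  obtain ⟨α₂, h₂, hα₂⟩ := exists_monomial_sub_mem_span_of_column (k := k) hj hq
  exact ⟨α₂, sub_add_sub_cancel (monomial α (1 : k)) _ _ ▸ add_mem h₁ h₂, hα₂⟩

theorem apply_inl_ne_zero_of_forall_inr_eq_zero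
    (hαβ : reesWeight α = reesWeight β)
    (hβ : ∀ e, β (.inr e) = 0) {v : Sum (Fin n) (Fin m)} (hv : β (.inl v) ≠ 0) :
    α (.inl v) ≠ 0 := by
  have hα : ∀ e, α (.inr e) = 0 := by
    have := mt reesWeight_inr_ne_zero_iff.mp (not_exists.mpr fun e => not_not.mpr (hβ e))
    rw [← hαβ, reesWeight_inr_ne_zero_iff] at this
    push Not at this
    exact this
  rcases v with p | q
  · have := reesWeight_inl_inl_ne_zero_iff.mp
      (by rw [hαβ, reesWeight_inl_inl_ne_zero_iff]; exact .inl hv)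
    simpa [hα] using this
  · have := reesWeight_inl_inr_ne_zero_iff.mp
      (by rw [hαβ, reesWeight_inl_inr_ne_zero_iff]; exact .inl hv)
    simpa [hα] using this

theorem exists_common_variable [Nontrivial k]
    (hαβ : reesWeight α = reesWeight β)
    (hβ : β ≠ 0) :
    ∃ s α', β s ≠ 0 ∧ α' s ≠ 0 ∧
      monomial α (1 : k) - monomial α' 1 ∈ Ideal.span (walkBinomials k n m id) := by
  by_cases hedge : ∃ e, β (.inr e) ≠ 0
  · obtain ⟨⟨p, q⟩, he⟩ := hedge
    obtain ⟨α', hα', he'⟩ := exists_monomial_sub_mem_span_of_edge (k := k) hαβ he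
    exact ⟨_, α', he, he', hα'⟩
  push Not at hedge
  obtain ⟨v | e, hs⟩ := Finsupp.ne_iff.mp hβ
  · exact ⟨_, α, hs, apply_inl_ne_zero_of_forall_inr_eq_zero hαβ hedge hs,
      by simp⟩
  · exact absurd (hedge e) hs

variable (k n m) in
theorem ker_reesPsi_eq_span_walkBinomials [Nontrivial k] :
    RingHom.ker (reesPsi k n m id) = Ideal.span (walkBinomials k n m id) := by
  have hle := Ideal.span_le.mpr (walkBinomials_subset_ker k n m id)
  rw [reesPsi_eq_aeval] at hle ⊢
  exact ker_aeval_monomial_one_eq_of_exchange _ reesExponent_ne_zero _ hle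
    fun _ _ => exists_common_variable

end CompleteBipartite

/-- For the complete bipartite graph `G` on `X = {x_1,…,x_n}`,
`Y = {y_1,…,y_m}` (edges indexed by `Fin n × Fin m`, via `edge = id`), the defining ideal
`𝒬 = ker ψ` of the Rees algebra of `I(G)` is generated by the binomials `T_{w+} − T_{w−}`
for even cycles `w` together with the binomials `v_0 T_{w+} − v_a T_{w−}` for even paths
`w = (v_0,…,v_a)`; in particular, `𝒬` is generated by binomials whose monomials have
total degree at most `1` in the variables `x_1,…,x_n,y_1,…,y_m`. -/
theorem ker_reesPsi_completeBipartite_eq_span (k : Type*) [Field k] (n m : ℕ) :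
    RingHom.ker (reesPsi k n m (id : Fin n × Fin m → Fin n × Fin m)) =
      Ideal.span {f : MvPolynomial (Sum (Sum (Fin n) (Fin m)) (Fin n × Fin m)) k |
        (∃ (ℓ : ℕ) (w : BipWalk n m (id : Fin n × Fin m → Fin n × Fin m) (2 * ℓ)),
          w.vert (Fin.last (2 * ℓ)) = w.vert 0 ∧
          (Function.Injective fun j : Fin (2 * ℓ) => w.vert j.castSucc) ∧
          f = Tplus k w - Tminus k w) ∨
        (∃ (a : ℕ) (w : BipWalk n m (id : Fin n × Fin m → Fin n × Fin m) a),
          Even a ∧ Function.Injective w.vert ∧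
          f = X (Sum.inl (w.vert 0)) * Tplus k w -
              X (Sum.inl (w.vert (Fin.last a))) * Tminus k w)} ∧
    ∃ B : Set (MvPolynomial (Sum (Sum (Fin n) (Fin m)) (Fin n × Fin m)) k),
      (∀ f ∈ B, ∃ α β : (Sum (Sum (Fin n) (Fin m)) (Fin n × Fin m)) →₀ ℕ,
        f = monomial α 1 - monomial β 1 ∧
        (∑ v : Sum (Fin n) (Fin m), α (Sum.inl v)) ≤ 1 ∧
        (∑ v : Sum (Fin n) (Fin m), β (Sum.inl v)) ≤ 1) ∧
      RingHom.ker (reesPsi k n m (id : Fin n × Fin m → Fin n × Fin m)) = Ideal.span B :=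
  ⟨CompleteBipartite.ker_reesPsi_eq_span_walkBinomials k n m, walkBinomials k n m id,
    fun _ => exists_eq_monomial_sub_monomial_of_mem_walkBinomials k n m id,
    CompleteBipartite.ker_reesPsi_eq_span_walkBinomials k n m⟩
end
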